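/- Let f ∈ L¹(𝕋, B(H)) be a Bochner-integrable B(H)-valued function, and let A_f be the Toeplitz matrix with entries \hat{f}(j−k) ∈ B(H). Then A_f is a two-sided Schur multiplier of B(ℓ²(H)) with ‖A_f‖_{M(ℓ²(H))} ≤ ‖f‖_{L¹(𝕋,B(H))}; moreover A_f ∈ L¹(ℓ²(H)). -/

import Mathlib

open Finset Filter

noncomputable section

variable {H : Type*} [NormedAddCommGroup H] [InnerProductSpace ℂ H]
  [CompleteSpace H] [TopologicalSpace.SeparableSpace H]

/-- `A` defines a bounded operator on `ℓ²(H)` with norm at most `C`, expressed through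
uniform bounds of the associated bilinear form on finitely supported sequences. -/
def SchurBoundedBy (A : ℕ → ℕ → (H →L[ℂ] H)) (C : ℝ) : Prop :=
  ∀ (F G : Finset ℕ) (x y : ℕ → H),
    ‖∑ k ∈ G, ∑ j ∈ F, (inner ℂ (A k j (x j)) (y k) : ℂ)‖ ≤
      C * Real.sqrt (∑ j ∈ F, ‖x j‖ ^ 2) * Real.sqrt (∑ k ∈ G, ‖y k‖ ^ 2)

/-- `A ∈ B(ℓ²(H))`. -/
def MemB (A : ℕ → ℕ → (H →L[ℂ] H)) : Prop :=
  ∃ C, 0 ≤ C ∧ SchurBoundedBy A C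

/-- The Schur product of two operator matrices: entrywise composition. -/
def schur (A B : ℕ → ℕ → (H →L[ℂ] H)) : ℕ → ℕ → (H →L[ℂ] H) :=
  fun k j => (A k j).comp (B k j)

/-- `A` is a right Schur multiplier with multiplier norm at most `C`. -/
def MrBoundedBy (A : ℕ → ℕ → (H →L[ℂ] H)) (C : ℝ) : Prop :=
  ∀ (B : ℕ → ℕ → (H →L[ℂ] H)) (D : ℝ), 0 ≤ D → SchurBoundedBy B D →
    SchurBoundedBy (schur B A) (C * D)

/-- `A` is a left Schur multiplier with multiplier norm at most `C`. -/
def MlBoundedBy (A : ℕ → ℕ → (H →L[ℂ] H)) (C : ℝ) : Prop :=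
  ∀ (B : ℕ → ℕ → (H →L[ℂ] H)) (D : ℝ), 0 ≤ D → SchurBoundedBy B D →
    SchurBoundedBy (schur A B) (C * D)

/-- `A ∈ M_r(ℓ²(H))`. -/
def MemMr (A : ℕ → ℕ → (H →L[ℂ] H)) : Prop :=
  ∃ C, 0 ≤ C ∧ MrBoundedBy A C

/-- `A ∈ M_l(ℓ²(H))`. -/
def MemMl (A : ℕ → ℕ → (H →L[ℂ] H)) : Prop :=
  ∃ C, 0 ≤ C ∧ MlBoundedBy A C

/-- A matrix polynomial: supported on finitely many diagonals, with uniformly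
bounded operator entries. -/
def IsMatPoly (A : ℕ → ℕ → (H →L[ℂ] H)) : Prop :=
  (∃ N : ℕ, ∀ k j : ℕ, N < ((j : ℤ) - (k : ℤ)).natAbs → A k j = 0) ∧
    ∃ M : ℝ, ∀ k j : ℕ, ‖A k j‖ ≤ M

/-- `A ∈ L¹_r(ℓ²(H))`: `A` is a right Schur multiplier lying in the closure of the
matrix polynomials in the right multiplier norm. -/
def MemL1r (A : ℕ → ℕ → (H →L[ℂ] H)) : Prop :=
  MemMr A ∧ ∀ ε : ℝ, 0 < ε → ∃ P : ℕ → ℕ → (H →L[ℂ] H),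
    IsMatPoly P ∧ MrBoundedBy (fun k j => A k j - P k j) ε

/-- `A ∈ L¹_l(ℓ²(H))`: `A` is a left Schur multiplier lying in the closure of the
matrix polynomials in the left multiplier norm. -/
def MemL1l (A : ℕ → ℕ → (H →L[ℂ] H)) : Prop :=
  MemMl A ∧ ∀ ε : ℝ, 0 < ε → ∃ P : ℕ → ℕ → (H →L[ℂ] H),
    IsMatPoly P ∧ MlBoundedBy (fun k j => A k j - P k j) ε

open Real in
/-- The `l`-th Fourier coefficient of a `B(H)`-valued integrable function:
`\hat{f}(l) = (1/2π)∫_{-π}^{π} e^{-ilt} f(t) dt` (Bochner integral). -/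
def opFourierCoeff (f : ℝ → (H →L[ℂ] H)) (l : ℤ) : H →L[ℂ] H :=
  ((2 * π)⁻¹ : ℝ) • ∫ t in (-π)..π, Complex.exp (-(l : ℂ) * t * Complex.I) • f t

/-!
Lift `f` to `F` on the circle `ℝ ⧸ 2πℤ` with normalised Haar measure, so that `A_f` is the
Toeplitz matrix of the Fourier coefficients of `F`. For a bounded matrix `B`, the Schur product
of `A_f` and `B` (on either side) is the average over `x` of `D_x (F x · B) D_x*`, where
`F x · B` composes every entry of `B` with `F x` and `D_x = diag (e^{ijx})` is unitary; each of
these has norm at most `‖F x‖ ‖B‖`, so averaging bounds the multiplier norm by `‖F‖₁`. The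
Toeplitz matrix of a trigonometric polynomial is a matrix polynomial and the bound is linear in
`F`, so the `L¹`-density of trigonometric polynomials (from the Fourier basis for scalar
functions, and through simple functions in general) puts `A_f` in `L¹(ℓ²(H))`.
-/

open MeasureTheory ComplexConjugate

theorem sqrt_sum_norm_sq_apply_le {ι 𝕜 V W : Type*} [NontriviallyNormedField 𝕜]
    [SeminormedAddCommGroup V] [SeminormedAddCommGroup W] [NormedSpace 𝕜 V] [NormedSpace 𝕜 W]
    (T : V →L[𝕜] W)
    (s : Finset ι) (x : ι → V) :
    √(∑ i ∈ s, ‖T (x i)‖ ^ 2) ≤ ‖T‖ * √(∑ i ∈ s, ‖x i‖ ^ 2) := by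
  rw [← Real.sqrt_sq (norm_nonneg T), ← Real.sqrt_mul (sq_nonneg _), mul_sum]
  gcongr with i
  rw [← mul_pow]
  gcongr
  exact T.le_opNorm (x i)

section SchurBounds

variable {E : Type*} [NormedAddCommGroup E] [InnerProductSpace ℂ E]
  {A : ℕ → ℕ → (E →L[ℂ] E)} {C : ℝ}

theorem SchurBoundedBy.mono (h : SchurBoundedBy A C) {C' : ℝ} (hC : C ≤ C') :
    SchurBoundedBy A C' := fun F G x y => (h F G x y).trans (by gcongr)

theorem MlBoundedBy.mono (h : MlBoundedBy A C) {C' : ℝ} (hC : C ≤ C') : MlBoundedBy A C' :=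
  fun B D hD hB => (h B D hD hB).mono (by gcongr)

theorem MrBoundedBy.mono (h : MrBoundedBy A C) {C' : ℝ} (hC : C ≤ C') : MrBoundedBy A C' :=
  fun B D hD hB => (h B D hD hB).mono (by gcongr)

theorem SchurBoundedBy.comp_left [CompleteSpace E] (h : SchurBoundedBy A C) (hC : 0 ≤ C)
    (T : E →L[ℂ] E) :
    SchurBoundedBy (fun k j => T.comp (A k j)) (‖T‖ * C) := by
  intro F G x y
  calc ‖∑ k ∈ G, ∑ j ∈ F, inner ℂ (T.comp (A k j) (x j)) (y k)‖
      = ‖∑ k ∈ G, ∑ j ∈ F, inner ℂ (A k j (x j)) (T.adjoint (y k))‖ := by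
        simp only [ContinuousLinearMap.comp_apply, ContinuousLinearMap.adjoint_inner_right]
    _ ≤ C * √(∑ j ∈ F, ‖x j‖ ^ 2) * √(∑ k ∈ G, ‖T.adjoint (y k)‖ ^ 2) := h F G x _
    _ ≤ C * √(∑ j ∈ F, ‖x j‖ ^ 2) * (‖T‖ * √(∑ k ∈ G, ‖y k‖ ^ 2)) := by
        gcongr
        simpa only [LinearIsometryEquiv.norm_map] using sqrt_sum_norm_sq_apply_le T.adjoint G y
    _ = ‖T‖ * C * √(∑ j ∈ F, ‖x j‖ ^ 2) * √(∑ k ∈ G, ‖y k‖ ^ 2) := by ring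

theorem SchurBoundedBy.comp_right (h : SchurBoundedBy A C) (hC : 0 ≤ C) (T : E →L[ℂ] E) :
    SchurBoundedBy (fun k j => (A k j).comp T) (C * ‖T‖) := by
  intro F G x y
  calc ‖∑ k ∈ G, ∑ j ∈ F, inner ℂ ((A k j).comp T (x j)) (y k)‖
      ≤ C * √(∑ j ∈ F, ‖T (x j)‖ ^ 2) * √(∑ k ∈ G, ‖y k‖ ^ 2) := h F G (fun j => T (x j)) y
    _ ≤ C * (‖T‖ * √(∑ j ∈ F, ‖x j‖ ^ 2)) * √(∑ k ∈ G, ‖y k‖ ^ 2) := by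
        gcongr
        exact sqrt_sum_norm_sq_apply_le T F x
    _ = C * ‖T‖ * √(∑ j ∈ F, ‖x j‖ ^ 2) * √(∑ k ∈ G, ‖y k‖ ^ 2) := by ring

theorem SchurBoundedBy.smul_mul_conj (h : SchurBoundedBy A C) {u : ℕ → ℂ}
    (hu : ∀ n, ‖u n‖ = 1) : SchurBoundedBy (fun k j => (u j * conj (u k)) • A k j) C := by
  intro F G x y
  have key : ∀ k j, inner ℂ (((u j * conj (u k)) • A k j) (x j)) (y k)
      = inner ℂ (A k j (u j • x j)) (u k • y k) := by
    intro k j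
    simp only [smul_apply, map_smul, inner_smul_left, inner_smul_right,
      map_mul, Complex.conj_conj]
    ring
  simpa only [key, norm_smul, hu, one_mul] using h F G (fun j => u j • x j) (fun k => u k • y k)

theorem inner_integral_left [CompleteSpace E] {α : Type*} [MeasurableSpace α] {μ : Measure α}
    {φ : α → E} (hφ : Integrable φ μ) (y : E) :
    inner ℂ (∫ t, φ t ∂μ) y = ∫ t, inner ℂ (φ t) y ∂μ := by
  rw [← inner_conj_symm, ← integral_inner hφ, ← integral_conj]
  simp only [inner_conj_symm]

theorem SchurBoundedBy.of_eq_integral [CompleteSpace E] {α : Type*} [MeasurableSpace α]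
    {μ : Measure α} {M : α → ℕ → ℕ → (E →L[ℂ] E)} {c : α → ℝ}
    (hM : ∀ k j v, Integrable (fun t => M t k j v) μ) (hc : Integrable c μ)
    (hA : ∀ k j v, A k j v = ∫ t, M t k j v ∂μ) (hMc : ∀ t, SchurBoundedBy (M t) (c t)) :
    SchurBoundedBy A (∫ t, c t ∂μ) := by
  intro F G x y
  have hterm : ∀ k j, Integrable (fun t => inner ℂ (M t k j (x j)) (y k)) μ :=
    fun k j => (hM k j (x j)).inner_const (y k)
  have hsum : ∑ k ∈ G, ∑ j ∈ F, inner ℂ (A k j (x j)) (y k)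
      = ∫ t, ∑ k ∈ G, ∑ j ∈ F, inner ℂ (M t k j (x j)) (y k) ∂μ := by
    rw [integral_finsetSum _ fun k _ => integrable_finsetSum _ fun j _ => hterm k j]
    refine sum_congr rfl fun k _ => ?_
    rw [integral_finsetSum _ fun j _ => hterm k j]
    exact sum_congr rfl fun j _ => by rw [hA, inner_integral_left (hM k j (x j))]
  rw [hsum, ← integral_mul_const, ← integral_mul_const]
  exact (norm_integral_le_integral_norm _).trans (integral_mono_of_nonneg
    (ae_of_all _ fun t => norm_nonneg _) ((hc.mul_const _).mul_const _)
    (ae_of_all _ fun t => hMc t F G x y))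

end SchurBounds

section TrigPoly

open AddCircle

variable {T : ℝ} {E : Type*} [NormedAddCommGroup E] [NormedSpace ℂ E]

def trigPoly (b : ℤ →₀ E) (x : AddCircle T) : E :=
  b.sum fun n c => fourier n x • c

theorem norm_fourier_apply (n : ℤ) (x : AddCircle T) : ‖fourier n x‖ = 1 := by
  rw [fourier_apply, Circle.norm_coe]

theorem continuous_trigPoly (b : ℤ →₀ E) : Continuous (trigPoly (T := T) b) :=
  continuous_finsetSum _ fun n _ => (fourier n).continuous.smul continuous_const

theorem trigPoly_add (b₁ b₂ : ℤ →₀ E) :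
    trigPoly (T := T) (b₁ + b₂) = trigPoly b₁ + trigPoly b₂ := by
  ext x
  exact Finsupp.sum_add_index' (fun _ => smul_zero _) fun _ _ _ => smul_add _ _ _

theorem trigPoly_mapRange_smul (a : ℤ →₀ ℂ) (c : E) (x : AddCircle T) :
    trigPoly (a.mapRange (· • c) (zero_smul ℂ c)) x = trigPoly a x • c := by
  rw [trigPoly, trigPoly, Finsupp.sum_mapRange_index fun _ => smul_zero _, Finsupp.sum,
    Finsupp.sum, Finset.sum_smul]
  exact Finset.sum_congr rfl fun n _ => (smul_assoc _ _ _).symm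

variable [Fact (0 < T)]

theorem integrable_trigPoly (b : ℤ →₀ E) : Integrable (trigPoly b) (haarAddCircle (T := T)) :=
  (continuous_trigPoly b).integrable_of_hasCompactSupport (HasCompactSupport.of_compactSpace _)

theorem fourierCoeff_fourier_smul_const [CompleteSpace E] (n l : ℤ) (c : E) :
    fourierCoeff (fun x : AddCircle T => fourier n x • c) l = (Pi.single n 1 : ℤ → ℂ) l • c := by
  rw [← fourierCoeff_fourier (T := T)]
  simp only [fourierCoeff, smul_smul, ← smul_eq_mul (a := fourier (-l) _)]
  exact integral_smul_const _ _

theorem fourierCoeff_trigPoly [CompleteSpace E] (b : ℤ →₀ E) (l : ℤ) :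
    fourierCoeff (trigPoly (T := T) b) l = b l := by
  have hmono : ∀ n, Integrable (fun x : AddCircle T => fourier n x • b n) haarAddCircle :=
    fun n => ((fourier n).continuous.smul continuous_const).integrable_of_hasCompactSupport
      (.of_compactSpace _)
  have hsum : trigPoly (T := T) b = ∑ n ∈ b.support, fun x => fourier n x • b n := by
    ext x
    simp [trigPoly, Finsupp.sum]
  rw [hsum, fourierCoeff.sum _ _ fun n _ => hmono n, Finset.sum_apply]
  simp only [fourierCoeff_fourier_smul_const, Pi.single_apply, ite_smul, one_smul, zero_smul,
    Finset.sum_ite_eq, Finsupp.if_mem_support]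

end TrigPoly

theorem integral_norm_add_le {α F : Type*} [MeasurableSpace α] [NormedAddCommGroup F]
    {μ : Measure α} {u v : α → F} (hu : Integrable u μ) (hv : Integrable v μ) :
    ∫ x, ‖u x + v x‖ ∂μ ≤ ∫ x, ‖u x‖ ∂μ + ∫ x, ‖v x‖ ∂μ := by
  rw [← integral_add hu.norm hv.norm]
  exact integral_mono_of_nonneg (ae_of_all _ fun _ => norm_nonneg _) (hu.norm.add hv.norm)
    (ae_of_all _ fun x => norm_add_le (u x) (v x))

section Density

open AddCircle

variable {T : ℝ} [Fact (0 < T)] {E : Type*} [NormedAddCommGroup E] [NormedSpace ℂ E]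

def TrigApproximable (F : AddCircle T → E) : Prop :=
  ∀ ⦃ε : ℝ⦄, 0 < ε → ∃ b : ℤ →₀ E, ∫ x, ‖F x - trigPoly b x‖ ∂haarAddCircle < ε

theorem MeasureTheory.Integrable.trigApproximable_complex {U : AddCircle T → ℂ}
    (hU : Integrable U haarAddCircle) : TrigApproximable U := by
  intro ε hε
  have hmem : hU.toL1 U ∈ closure (Submodule.span ℂ (Set.range (fourierLp (T := T) 1)) :
      Set (Lp ℂ 1 haarAddCircle)) := by
    rw [← Submodule.topologicalClosure_coe, span_fourierLp_closure_eq_top ENNReal.one_ne_top]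
    trivial
  obtain ⟨v, hv, hdist⟩ := Metric.mem_closure_iff.mp hmem ε hε
  obtain ⟨a, rfl⟩ := Finsupp.mem_span_range_iff_exists_finsupp.mp hv
  refine ⟨a, lt_of_eq_of_lt ?_ hdist⟩
  have hLp : (a.sum fun n c => c • fourierLp (T := T) 1 n) =
      ContinuousMap.toLp 1 haarAddCircle ℂ (a.sum fun n c => c • fourier n) := by
    rw [map_finsuppSum]
    exact Finsupp.sum_congr fun n _ => (map_smul _ _ _).symm
  rw [hLp, L1.dist_eq_integral_dist]
  refine integral_congr_ae ?_
  filter_upwards [hU.coeFn_toL1, ContinuousMap.coeFn_toLp (p := 1) (μ := haarAddCircle) (𝕜 := ℂ)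
    (a.sum fun n c => c • fourier n)] with x hx hq
  rw [hx, hq, dist_eq_norm, trigPoly]
  simp [Finsupp.sum, mul_comm]

theorem MeasureTheory.Integrable.trigApproximable_smul_const {U : AddCircle T → ℂ}
    (hU : Integrable U haarAddCircle) (c : E) : TrigApproximable fun x => U x • c := by
  intro ε hε
  obtain ⟨a, ha⟩ := hU.trigApproximable_complex (show 0 < ε / (‖c‖ + 1) by positivity)
  refine ⟨a.mapRange (· • c) (zero_smul ℂ c), ?_⟩
  simp_rw [trigPoly_mapRange_smul, ← sub_smul, norm_smul]
  rw [integral_mul_const]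
  calc _ ≤ (∫ x, ‖U x - trigPoly a x‖ ∂haarAddCircle) * (‖c‖ + 1) := by gcongr; linarith
    _ < ε := (lt_div_iff₀ (by positivity)).mp ha

theorem TrigApproximable.add {F G : AddCircle T → E} (hF : Integrable F haarAddCircle)
    (hG : Integrable G haarAddCircle) (hFa : TrigApproximable F)
    (hGa : TrigApproximable G) : TrigApproximable (F + G) := by
  intro ε hε
  obtain ⟨b₁, h₁⟩ := hFa (half_pos hε)
  obtain ⟨b₂, h₂⟩ := hGa (half_pos hε)
  refine ⟨b₁ + b₂, ?_⟩
  calc ∫ x, ‖(F + G) x - trigPoly (b₁ + b₂) x‖ ∂haarAddCircle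
      = ∫ x, ‖(F x - trigPoly b₁ x) + (G x - trigPoly b₂ x)‖ ∂haarAddCircle := by
        simp only [trigPoly_add, Pi.add_apply, add_sub_add_comm]
    _ ≤ _ := integral_norm_add_le (hF.sub (integrable_trigPoly b₁))
        (hG.sub (integrable_trigPoly b₂))
    _ < ε / 2 + ε / 2 := add_lt_add h₁ h₂
    _ = ε := add_halves ε

theorem isClosed_setOf_trigApproximable :
    IsClosed {φ : AddCircle T →₁[haarAddCircle] E | TrigApproximable φ} := by
  refine isClosed_of_closure_subset fun φ hφ ε hε => ?_
  obtain ⟨ψ, hψ, hdist⟩ := Metric.mem_closure_iff.mp hφ (ε / 2) (half_pos hε)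
  obtain ⟨b, hb⟩ := hψ (half_pos hε)
  refine ⟨b, ?_⟩
  have hφψ : ∫ x, ‖φ x - ψ x‖ ∂haarAddCircle = dist φ ψ := by
    rw [L1.dist_eq_integral_dist]
    simp only [dist_eq_norm]
  calc ∫ x, ‖φ x - trigPoly b x‖ ∂haarAddCircle
      = ∫ x, ‖(φ x - ψ x) + (ψ x - trigPoly b x)‖ ∂haarAddCircle := by
        simp only [sub_add_sub_cancel]
    _ ≤ _ := integral_norm_add_le ((L1.integrable_coeFn φ).sub (L1.integrable_coeFn ψ))
        ((L1.integrable_coeFn ψ).sub (integrable_trigPoly b))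
    _ < ε / 2 + ε / 2 := add_lt_add (hφψ ▸ hdist) hb
    _ = ε := add_halves ε

theorem MeasureTheory.Integrable.trigApproximable {F : AddCircle T → E}
    (hF : Integrable F haarAddCircle) : TrigApproximable F := by
  refine Integrable.induction (TrigApproximable (T := T)) (fun c s hs _ => ?_)
    (fun F G _ hF hG hFa hGa => hFa.add hF hG hGa) isClosed_setOf_trigApproximable
    (fun F G hFG _ hFa ε hε => ?_) hF
  · have hsc : s.indicator (fun _ => c) = fun x => s.indicator (fun _ => (1 : ℂ)) x • c := by
      ext x
      by_cases hx : x ∈ s <;> simp [hx]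
    exact hsc ▸ ((integrable_const (1 : ℂ)).indicator hs).trigApproximable_smul_const c
  · obtain ⟨b, hb⟩ := hFa hε
    refine ⟨b, (integral_congr_ae ?_).trans_lt hb⟩
    filter_upwards [hFG] with x hx
    rw [hx]

end Density

section Toeplitz

open AddCircle

variable {T : ℝ}

theorem fourier_neg_sub_apply (j k : ℤ) (x : AddCircle T) :
    fourier (-(j - k)) x = fourier (-j) x * conj (fourier (-k) x) := by
  rw [fourier_neg (n := k), Complex.conj_conj, ← fourier_add, neg_sub, sub_eq_neg_add]

variable [Fact (0 < T)] {V : Type*} [NormedAddCommGroup V] [NormedSpace ℂ V]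

theorem ContinuousLinearMap.map_fourierCoeff [CompleteSpace V] {W : Type*} [NormedAddCommGroup W]
    [NormedSpace ℂ W] [CompleteSpace W] (L : V →L[ℂ] W) {G : AddCircle T → V}
    (hG : Integrable G haarAddCircle) (n : ℤ) :
    L (fourierCoeff G n) = fourierCoeff (fun x => L (G x)) n := by
  simp only [fourierCoeff, ← L.integral_comp_comm (hG.fourier_smul _), map_smul]

theorem fourierCoeff_sub {G₁ G₂ : AddCircle T → V} (h₁ : Integrable G₁ haarAddCircle)
    (h₂ : Integrable G₂ haarAddCircle) :
    fourierCoeff (G₁ - G₂) = fourierCoeff G₁ - fourierCoeff G₂ := by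
  ext n
  simp only [fourierCoeff, Pi.sub_apply, smul_sub]
  exact integral_sub (h₁.fourier_smul _) (h₂.fourier_smul _)

def toeplitz (F : AddCircle T → V) : ℕ → ℕ → V :=
  fun k j => fourierCoeff F ((j : ℤ) - k)

theorem toeplitz_sub {F G : AddCircle T → V} (hF : Integrable F haarAddCircle)
    (hG : Integrable G haarAddCircle) :
    (fun k j => toeplitz F k j - toeplitz G k j) = toeplitz (F - G) := by
  funext k j
  simp only [toeplitz, fourierCoeff_sub hF hG, Pi.sub_apply]

theorem toeplitz_trigPoly [CompleteSpace V] (b : ℤ →₀ V) :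
    toeplitz (trigPoly (T := T) b) = fun k j : ℕ => b ((j : ℤ) - k) := by
  funext k j
  exact fourierCoeff_trigPoly b _

variable {E : Type*} [NormedAddCommGroup E] [InnerProductSpace ℂ E] [CompleteSpace E]

theorem mlBoundedBy_toeplitz {F : AddCircle T → (E →L[ℂ] E)}
    (hF : Integrable F haarAddCircle) :
    MlBoundedBy (toeplitz F) (∫ x, ‖F x‖ ∂haarAddCircle) := by
  intro B D hD hB
  rw [← integral_mul_const]
  refine SchurBoundedBy.of_eq_integral
    (M := fun x k j => fourier (-((j : ℤ) - k)) x • (F x).comp (B k j))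
    (fun k j v => (hF.apply_continuousLinearMap (B k j v)).fourier_smul _)
    (hF.norm.mul_const D) (fun k j v => ?_) (fun x => ?_)
  · exact (ContinuousLinearMap.apply ℂ E (B k j v)).map_fourierCoeff hF _
  · simpa only [fourier_neg_sub_apply] using (hB.comp_left hD (F x)).smul_mul_conj
      (u := fun n => fourier (-(n : ℤ)) x) fun n => norm_fourier_apply _ x

theorem mrBoundedBy_toeplitz {F : AddCircle T → (E →L[ℂ] E)}
    (hF : Integrable F haarAddCircle) :
    MrBoundedBy (toeplitz F) (∫ x, ‖F x‖ ∂haarAddCircle) := by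
  intro B D hD hB
  rw [← integral_mul_const]
  refine SchurBoundedBy.of_eq_integral
    (M := fun x k j => fourier (-((j : ℤ) - k)) x • (B k j).comp (F x))
    (fun k j v => ((B k j).integrable_comp (hF.apply_continuousLinearMap v)).fourier_smul _)
    (hF.norm.mul_const D) (fun k j v => ?_) (fun x => ?_)
  · exact (congrArg (B k j) ((ContinuousLinearMap.apply ℂ E v).map_fourierCoeff hF _)).trans
      ((B k j).map_fourierCoeff (hF.apply_continuousLinearMap v) _)
  · rw [mul_comm]
    simpa only [fourier_neg_sub_apply] using (hB.comp_right hD (F x)).smul_mul_conj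
      (u := fun n => fourier (-(n : ℤ)) x) fun n => norm_fourier_apply _ x

theorem isMatPoly_toeplitz_trigPoly (b : ℤ →₀ (E →L[ℂ] E)) :
    IsMatPoly (toeplitz (trigPoly (T := T) b)) := by
  rw [toeplitz_trigPoly]
  refine ⟨⟨b.support.sup Int.natAbs, fun k j hjk => ?_⟩, ⟨b.sum fun _ c => ‖c‖, fun k j => ?_⟩⟩
  · by_contra h
    exact hjk.not_ge (Finset.le_sup (f := Int.natAbs) (Finsupp.mem_support_iff.2 h))
  · dsimp only
    by_cases h : (j : ℤ) - k ∈ b.support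
    · exact Finset.single_le_sum (f := fun n => ‖b n‖) (fun _ _ => norm_nonneg _) h
    · rw [Finsupp.notMem_support_iff.1 h, norm_zero]
      exact Finset.sum_nonneg fun _ _ => norm_nonneg _

theorem memL1l_toeplitz {F : AddCircle T → (E →L[ℂ] E)} (hF : Integrable F haarAddCircle) :
    MemL1l (toeplitz F) := by
  refine ⟨⟨_, integral_nonneg fun _ => norm_nonneg _, mlBoundedBy_toeplitz hF⟩, fun ε hε => ?_⟩
  obtain ⟨b, hb⟩ := hF.trigApproximable hε
  refine ⟨_, isMatPoly_toeplitz_trigPoly (T := T) b, ?_⟩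
  rw [toeplitz_sub hF (integrable_trigPoly b)]
  exact (mlBoundedBy_toeplitz (hF.sub (integrable_trigPoly b))).mono hb.le

theorem memL1r_toeplitz {F : AddCircle T → (E →L[ℂ] E)} (hF : Integrable F haarAddCircle) :
    MemL1r (toeplitz F) := by
  refine ⟨⟨_, integral_nonneg fun _ => norm_nonneg _, mrBoundedBy_toeplitz hF⟩, fun ε hε => ?_⟩
  obtain ⟨b, hb⟩ := hF.trigApproximable hε
  refine ⟨_, isMatPoly_toeplitz_trigPoly (T := T) b, ?_⟩
  rw [toeplitz_sub hF (integrable_trigPoly b)]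
  exact (mrBoundedBy_toeplitz (hF.sub (integrable_trigPoly b))).mono hb.le

end Toeplitz

section Transfer

open AddCircle Set

variable {T : ℝ} [hT : Fact (0 < T)]

theorem integrable_liftIoc {V : Type*} [NormedAddCommGroup V] {a : ℝ} {f : ℝ → V}
    (hf : IntegrableOn f (Ioc a (a + T))) : Integrable (liftIoc T a f) haarAddCircle := by
  have hvol : Integrable (liftIoc T a f) volume :=
    ((measurePreserving_subtype_coe measurableSet_Ioc).comp
      (measurePreserving_equivIoc T)).integrable_comp_of_integrable hf
  rwa [volume_eq_smul_haarAddCircle,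
    integrable_smul_measure (ENNReal.ofReal_pos.2 hT.out).ne' ENNReal.ofReal_ne_top] at hvol

theorem integral_norm_liftIoc {V : Type*} [NormedAddCommGroup V] (a : ℝ) (f : ℝ → V) :
    ∫ x, ‖liftIoc T a f x‖ ∂haarAddCircle = T⁻¹ * ∫ t in a..a + T, ‖f t‖ := by
  rw [integral_haarAddCircle, smul_eq_mul]
  exact congrArg _ (integral_liftIoc_eq_intervalIntegral (T := T) (f := fun t => ‖f t‖))

end Transfer

open Real AddCircle in
theorem opFourierCoeff_eq_fourierCoeff_liftIoc {E : Type*} [NormedAddCommGroup E]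
    [InnerProductSpace ℂ E] [Fact (0 < 2 * π)] (f : ℝ → (E →L[ℂ] E)) (l : ℤ) :
    opFourierCoeff f l = fourierCoeff (liftIoc (2 * π) (-π) f) l := by
  have hπ : -π + 2 * π = π := by ring
  rw [fourierCoeff_eq_intervalIntegral _ _ (-π), hπ, opFourierCoeff, one_div]
  congr 1
  refine intervalIntegral.integral_congr_ae (ae_of_all _ fun t ht => ?_)
  rw [Set.uIoc_of_le (by linarith [pi_pos])] at ht
  rw [liftIoc_coe_apply (by rwa [hπ]), fourier_coe_apply]
  congr 2
  push_cast
  field_simp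

open Real in
/-- If `f ∈ L¹(𝕋, B(H))`, the Toeplitz matrix `A_f = (\hat{f}(j−k))` is a two-sided Schur
multiplier with `‖A_f‖_{M(ℓ²(H))} ≤ ‖f‖_{L¹(𝕋,B(H))}`, and moreover `A_f ∈ L¹(ℓ²(H))`. -/
theorem toeplitz_of_L1_function (f : ℝ → (H →L[ℂ] H))
    (hf : IntervalIntegrable f MeasureTheory.volume (-π) π) :
    MlBoundedBy (fun k j => opFourierCoeff f ((j : ℤ) - (k : ℤ)))
        ((2 * π)⁻¹ * ∫ t in (-π)..π, ‖f t‖) ∧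
      MrBoundedBy (fun k j => opFourierCoeff f ((j : ℤ) - (k : ℤ)))
        ((2 * π)⁻¹ * ∫ t in (-π)..π, ‖f t‖) ∧
      MemL1l (fun k j => opFourierCoeff f ((j : ℤ) - (k : ℤ))) ∧
      MemL1r (fun k j => opFourierCoeff f ((j : ℤ) - (k : ℤ))) := by
  have : Fact (0 < 2 * π) := ⟨two_pi_pos⟩
  have hπ : -π + 2 * π = π := by ring
  set F := AddCircle.liftIoc (2 * π) (-π) f
  have hF : Integrable F AddCircle.haarAddCircle := integrable_liftIoc (by rw [hπ]; exact hf.1)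
  have hA : (fun k j : ℕ => opFourierCoeff f ((j : ℤ) - (k : ℤ))) = toeplitz F :=
    funext fun k => funext fun j => opFourierCoeff_eq_fourierCoeff_liftIoc f _
  have hC : (2 * π)⁻¹ * ∫ t in (-π)..π, ‖f t‖ = ∫ x, ‖F x‖ ∂AddCircle.haarAddCircle := by
    rw [integral_norm_liftIoc, hπ]
  rw [hA, hC]
  exact ⟨mlBoundedBy_toeplitz hF, mrBoundedBy_toeplitz hF, memL1l_toeplitz hF,
    memL1r_toeplitz hF⟩
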